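/- arXiv:1902.08745 — 5 statements merged into one kernel-verified Lean document; each statement's English description precedes it below -/
import Mathlib

section
/- Let d ≥ 1, let P, Q : ℝ^d → (0,∞) be continuously differentiable, let c > 0 be a constant, and let v : ℝ^d → ℝ^d be twice continuously differentiable such that V(x) := I + (∇vᵀ)(x) is invertible for every x ∈ ℝ^d. Define ξ(x) = P(x+v(x)) · Q(x+v(x)) · det V(x) / (c · P(x)). Let f : (0,∞) → ℝ be twice continuously differentiable with f''(ξ(x)) ≠ 0 for every x. Suppose the reduced Euler–Lagrange equation holds: for every x, the row vector ∇ₓᵀ[f'(ξ(x))] · det V(x) · (V(x)ᵀ)^{-1} is zero. Then for every x and every i ∈ {1,…,d}: 0 = ∂/∂x_i [ P(x+v(x)) Q(x+v(x)) ] · P(x) + P(x+v(x)) Q(x+v(x)) · tr( V(x)^{-1} · ∂V/∂x_i (x) ) · P(x) − P(x+v(x)) Q(x+v(x)) · ∂P/∂x_i (x). In particular this equation satisfied by v does not depend on the choice of f. -/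
/-!
Since `det V · V⁻ᵀ` is invertible, the reduced Euler–Lagrange equation says that `f'(ξ)` has
vanishing gradient, and as `f''(ξ) ≠ 0` the chain rule gives `∇ξ = 0`. Differentiating
`ξ · c P = P(x+v) Q(x+v) · det V` with Jacobi's formula `∂ᵢ det V = det V · tr(V⁻¹ ∂ᵢV)` and
dividing by `det V` yields the claimed equation, in which `f` no longer appears.
-/

open Matrix

/-- Partial derivative `∂f/∂x_i` of a scalar function on `ℝ^d`. -/
noncomputable def pd {d : ℕ} (i : Fin d) (f : (Fin d → ℝ) → ℝ) (x : Fin d → ℝ) : ℝ :=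
  fderiv ℝ f x (Pi.single i 1)

/-- `∇vᵀ`: the matrix whose `(i,j)` entry is `∂v_j/∂x_i`. -/
noncomputable def gradT {d : ℕ} (v : (Fin d → ℝ) → (Fin d → ℝ)) (x : Fin d → ℝ) :
    Matrix (Fin d) (Fin d) ℝ :=
  Matrix.of fun i j => pd i (fun y => v y j) x

section JacobiFormula

variable {𝕜 : Type*} [NontriviallyNormedField 𝕜] {n : Type*} [Fintype n] [DecidableEq n]

noncomputable def Matrix.detContinuousMultilinearMap (𝕜 n : Type*) [NontriviallyNormedField 𝕜]
    [Fintype n] [DecidableEq n] : ContinuousMultilinearMap 𝕜 (fun _ : n => n → 𝕜) 𝕜 :=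
  ∑ σ : Equiv.Perm n, ((Equiv.Perm.sign σ : ℤ) : 𝕜) •
    (ContinuousMultilinearMap.mkPiAlgebra 𝕜 n 𝕜).compContinuousLinearMap
      fun j => ContinuousLinearMap.proj (σ.symm j)

theorem Matrix.detContinuousMultilinearMap_apply (m : n → n → 𝕜) :
    detContinuousMultilinearMap 𝕜 n m = (of m).det := by
  rw [det_apply']
  simp only [detContinuousMultilinearMap, _root_.sum_apply, _root_.smul_apply,
    ContinuousMultilinearMap.compContinuousLinearMap_apply,
    ContinuousMultilinearMap.mkPiAlgebra_apply, ContinuousLinearMap.proj_apply, smul_eq_mul,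
    of_apply]
  refine Finset.sum_congr rfl fun σ _ => ?_
  rw [← Equiv.prod_comp σ]
  simp

theorem Matrix.sum_det_updateRow_eq_det_mul_trace {R : Type*} [CommRing R]
    (A H : Matrix n n R) (hA : IsUnit A.det) :
    ∑ a, (A.updateRow a (H a)).det = A.det * (A⁻¹ * H).trace := by
  have hrow : ∀ a, H a = ∑ k, (H * A⁻¹) a k • A k := by
    intro a
    ext b
    simp only [Finset.sum_apply, Pi.smul_apply, smul_eq_mul]
    rw [← mul_apply, Matrix.mul_assoc, nonsing_inv_mul A hA, Matrix.mul_one]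
  calc ∑ a, (A.updateRow a (H a)).det = ∑ a, (H * A⁻¹) a a * A.det := by
        refine Finset.sum_congr rfl fun a _ => ?_
        rw [hrow a, det_updateRow_sum, smul_eq_mul]
    _ = A.det * (A⁻¹ * H).trace := by
        rw [← Finset.sum_mul, mul_comm, trace_mul_comm]
        rfl

variable {E : Type*} [NormedAddCommGroup E] [NormedSpace 𝕜 E] {M : E → Matrix n n 𝕜} {x : E}

theorem Matrix.hasFDerivAt_det_comp (hM : ∀ a b, DifferentiableAt 𝕜 (fun y => M y a b) x) :
    HasFDerivAt (fun y => (M y).det)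
      (∑ a, ((detContinuousMultilinearMap 𝕜 n).toContinuousLinearMap (M x) a).comp
        (ContinuousLinearMap.pi fun b => fderiv 𝕜 (fun y => M y a b) x)) x := by
  have hrows : ∀ a, HasFDerivAt (fun y => M y a)
      (ContinuousLinearMap.pi fun b => fderiv 𝕜 (fun y => M y a b) x) x :=
    fun a => hasFDerivAt_pi.2 fun b => (hM a b).hasFDerivAt
  have h := HasFDerivAt.multilinear_comp (detContinuousMultilinearMap 𝕜 n) hrows
  rwa [funext fun y => detContinuousMultilinearMap_apply (M y)] at h

theorem Matrix.differentiableAt_det_comp (hM : ∀ a b, DifferentiableAt 𝕜 (fun y => M y a b) x) :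
    DifferentiableAt 𝕜 (fun y => (M y).det) x :=
  (hasFDerivAt_det_comp hM).differentiableAt

theorem Matrix.fderiv_det_comp_apply (hM : ∀ a b, DifferentiableAt 𝕜 (fun y => M y a b) x)
    (hdet : IsUnit (M x).det) (e : E) :
    fderiv 𝕜 (fun y => (M y).det) x e =
      (M x).det * ((M x)⁻¹ * of fun a b => fderiv 𝕜 (fun y => M y a b) x e).trace := by
  rw [(hasFDerivAt_det_comp hM).fderiv, ← sum_det_updateRow_eq_det_mul_trace _ _ hdet,
    _root_.sum_apply]
  exact Finset.sum_congr rfl fun a _ => detContinuousMultilinearMap_apply _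

theorem Matrix.eq_zero_of_forall_sum_mul_det_mul_transpose_inv {K : Type*} [Field K]
    {A : Matrix n n K} (hA : IsUnit A) {u : n → K}
    (h : ∀ j, ∑ i, u i * (A.det * (Aᵀ)⁻¹ i j) = 0) : u = 0 := by
  have hdet : A.det ≠ 0 := ((isUnit_iff_isUnit_det A).1 hA).ne_zero
  have hvec : u ᵥ* (Aᵀ)⁻¹ = 0 := by
    funext j
    have hj : A.det * ∑ i, u i * (Aᵀ)⁻¹ i j = 0 := by
      rw [Finset.mul_sum, ← h j]
      exact Finset.sum_congr rfl fun i _ => by ring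
    exact (mul_eq_zero.1 hj).resolve_left hdet
  exact vecMul_injective_iff_isUnit.2 (isUnit_nonsing_inv_iff.2 ((isUnit_transpose A).2 hA))
    (hvec.trans (zero_vecMul _).symm)

end JacobiFormula

section PartialDerivatives

variable {d : ℕ} {i : Fin d} {f g : (Fin d → ℝ) → ℝ} {x : Fin d → ℝ}

theorem pd_mul (hf : DifferentiableAt ℝ f x) (hg : DifferentiableAt ℝ g x) :
    pd i (fun y => f y * g y) x = f x * pd i g x + g x * pd i f x := by
  simp only [pd, fderiv_fun_mul hf hg, _root_.add_apply, _root_.smul_apply, smul_eq_mul]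

theorem pd_const_mul (hf : DifferentiableAt ℝ f x) (c : ℝ) :
    pd i (fun y => c * f y) x = c * pd i f x := by
  simp only [pd, fderiv_const_mul hf, _root_.smul_apply, smul_eq_mul]

theorem pd_comp_of_hasDerivAt {h : ℝ → ℝ} {h' : ℝ} (hh : HasDerivAt h h' (f x))
    (hf : DifferentiableAt ℝ f x) : pd i (fun y => h (f y)) x = h' * pd i f x := by
  change fderiv ℝ (h ∘ f) x _ = _
  rw [(hh.comp_hasFDerivAt x hf.hasFDerivAt).fderiv]
  rfl

theorem differentiable_gradT_apply {v : (Fin d → ℝ) → (Fin d → ℝ)} (hv : ContDiff ℝ 2 v)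
    (a b : Fin d) : Differentiable ℝ (fun y => gradT v y a b) :=
  ((((contDiff_apply ℝ ℝ b).comp hv).fderiv_right (m := 1) (by norm_num)).differentiable
    one_ne_zero).clm_apply (differentiable_const _)

end PartialDerivatives

theorem ContDiffOn.hasDerivAt_deriv {f : ℝ → ℝ} {s : Set ℝ} {t : ℝ} (hf : ContDiffOn ℝ 2 f s)
    (hs : IsOpen s) (ht : t ∈ s) : HasDerivAt (deriv f) (deriv (deriv f) t) t :=
  (((hf.deriv_of_isOpen hs (m := 1) (by norm_num)).differentiableOn one_ne_zero).differentiableAt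
    (hs.mem_nhds ht)).hasDerivAt

theorem stmt2_general {d : ℕ}
    (P Q : (Fin d → ℝ) → ℝ) (hP : ContDiff ℝ 1 P) (hQ : ContDiff ℝ 1 Q)
    (hPpos : ∀ x, 0 < P x)
    (c : ℝ) (hc : 0 < c)
    (v : (Fin d → ℝ) → (Fin d → ℝ)) (hv : ContDiff ℝ 2 v)
    (V : (Fin d → ℝ) → Matrix (Fin d) (Fin d) ℝ)
    (hV : ∀ x, V x = 1 + gradT v x)
    (hinv : ∀ x, IsUnit (V x))
    (ξ : (Fin d → ℝ) → ℝ)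
    (hξ : ∀ x, ξ x = P (x + v x) * Q (x + v x) * (V x).det / (c * P x))
    (f : ℝ → ℝ) (hf : ContDiffOn ℝ 2 f (Set.Ioi 0))
    (hξpos : ∀ x, ξ x ∈ Set.Ioi (0 : ℝ))
    (hf'' : ∀ x, deriv (deriv f) (ξ x) ≠ 0)
    (hEL : ∀ (x : Fin d → ℝ) (j : Fin d),
      ∑ i : Fin d, pd i (fun y => deriv f (ξ y)) x * ((V x).det * ((V x)ᵀ)⁻¹ i j) = 0) :
    ∀ (x : Fin d → ℝ) (i : Fin d),
      0 = pd i (fun y => P (y + v y) * Q (y + v y)) x * P x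
        + P (x + v x) * Q (x + v x) *
            Matrix.trace ((V x)⁻¹ * Matrix.of (fun a b => pd i (fun y => V y a b) x)) * P x
        - P (x + v x) * Q (x + v x) * pd i P x := by
  intro x i
  set g : (Fin d → ℝ) → ℝ := fun y => P (y + v y) * Q (y + v y)
  have hPdiff : Differentiable ℝ P := hP.differentiable one_ne_zero
  have hgdiff : Differentiable ℝ g := by
    have hshift : Differentiable ℝ fun y => y + v y :=
      differentiable_id.add (hv.differentiable two_ne_zero)
    exact (hPdiff.comp hshift).mul ((hQ.differentiable one_ne_zero).comp hshift)
  have hVdiff : ∀ a b, DifferentiableAt ℝ (fun y => V y a b) x := by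
    intro a b
    simp only [hV, Matrix.add_apply]
    exact (differentiableAt_const _).add (differentiable_gradT_apply hv a b x)
  have hdetV : IsUnit (V x).det := (isUnit_iff_isUnit_det _).1 (hinv x)
  have hξdiff : DifferentiableAt ℝ ξ x := by
    rw [show ξ = fun y => g y * (V y).det * (c * P y)⁻¹ from
      funext fun y => (hξ y).trans (div_eq_mul_inv _ _)]
    exact ((hgdiff x).mul (differentiableAt_det_comp hVdiff)).mul
      (((hPdiff x).const_mul c).fun_inv (mul_pos hc (hPpos x)).ne')
  have hpdξ : pd i ξ x = 0 := by
    have hgrad := congrFun (eq_zero_of_forall_sum_mul_det_mul_transpose_inv (hinv x) (hEL x)) i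
    rw [Pi.zero_apply, pd_comp_of_hasDerivAt (hf.hasDerivAt_deriv isOpen_Ioi (hξpos x)) hξdiff]
      at hgrad
    exact (mul_eq_zero.1 hgrad).resolve_left (hf'' x)
  have hξmul : ∀ y, ξ y * (c * P y) = g y * (V y).det := fun y => by
    rw [hξ y, div_mul_cancel₀ _ (mul_pos hc (hPpos y)).ne']
  have hprod := congrArg (pd i · x) (funext hξmul)
  have hJacobi : pd i (fun y => (V y).det) x =
      (V x).det * ((V x)⁻¹ * of fun a b => pd i (fun y => V y a b) x).trace :=
    fderiv_det_comp_apply hVdiff hdetV _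
  simp only [pd_mul hξdiff ((hPdiff x).const_mul c), pd_const_mul (hPdiff x),
    pd_mul (hgdiff x) (differentiableAt_det_comp hVdiff), hpdξ, hJacobi] at hprod
  have hcleared : (V x).det * (pd i g x * P x
      + g x * ((V x)⁻¹ * of fun a b => pd i (fun y => V y a b) x).trace * P x
      - g x * pd i P x) = 0 := by
    linear_combination pd i P x * hξmul x - P x * hprod
  exact ((mul_eq_zero.1 hcleared).resolve_left hdetV.ne_zero).symm

/-- Theorem 1 of the paper: invariance of the control input under the
f-divergence class.  Let `P, Q : ℝ^d → (0,∞)` be C¹, `c > 0`, `v : ℝ^d → ℝ^d` C² with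
`V x = I + ∇vᵀ(x)` invertible everywhere, and
`ξ x = P(x+v x) Q(x+v x) det V(x) / (c P x)`.  Let `f` be C² on `(0,∞)` with
`f''(ξ x) ≠ 0` for all `x`.  If the reduced Euler–Lagrange equation
`∇ₓᵀ[f'(ξ x)] · det V(x) · (V(x)ᵀ)⁻¹ = 0` holds everywhere, then for every `x` and `i`,
`0 = ∂_i[P(x+v)Q(x+v)]·P(x) + P(x+v)Q(x+v)·tr(V⁻¹ ∂V/∂x_i)·P(x) − P(x+v)Q(x+v)·∂_i P(x)`;
in particular this equation does not depend on the choice of `f`. -/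
theorem stmt2 {d : ℕ} (hd : 1 ≤ d)
    (P Q : (Fin d → ℝ) → ℝ) (hP : ContDiff ℝ 1 P) (hQ : ContDiff ℝ 1 Q)
    (hPpos : ∀ x, 0 < P x) (hQpos : ∀ x, 0 < Q x)
    (c : ℝ) (hc : 0 < c)
    (v : (Fin d → ℝ) → (Fin d → ℝ)) (hv : ContDiff ℝ 2 v)
    (V : (Fin d → ℝ) → Matrix (Fin d) (Fin d) ℝ)
    (hV : ∀ x, V x = 1 + gradT v x)
    (hinv : ∀ x, IsUnit (V x))
    (ξ : (Fin d → ℝ) → ℝ)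
    (hξ : ∀ x, ξ x = P (x + v x) * Q (x + v x) * (V x).det / (c * P x))
    (f : ℝ → ℝ) (hf : ContDiffOn ℝ 2 f (Set.Ioi 0))
    (hξpos : ∀ x, ξ x ∈ Set.Ioi (0 : ℝ))
    (hf'' : ∀ x, deriv (deriv f) (ξ x) ≠ 0)
    (hEL : ∀ (x : Fin d → ℝ) (j : Fin d),
      ∑ i : Fin d, pd i (fun y => deriv f (ξ y)) x * ((V x).det * ((V x)ᵀ)⁻¹ i j) = 0) :
    ∀ (x : Fin d → ℝ) (i : Fin d),
      0 = pd i (fun y => P (y + v y) * Q (y + v y)) x * P x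
        + P (x + v x) * Q (x + v x) *
            Matrix.trace ((V x)⁻¹ * Matrix.of (fun a b => pd i (fun y => V y a b) x)) * P x
        - P (x + v x) * Q (x + v x) * pd i P x :=
  stmt2_general P Q hP hQ hPpos c hc v hv V hV hinv ξ hξ f hf hξpos hf'' hEL
end

section
/- Let p : ℝ^d → (0,∞) be C¹ with ∫_{ℝ^d} p dx = 1, let h : ℝ^d → ℝ be C¹ with ∫_{ℝ^d} |h| p dx < ∞, and let K : ℝ^d → ℝ^d be C¹ such that the function div(pK) = ∑_{i=1}^d ∂(pK_i)/∂x_i is Lebesgue integrable on ℝ^d with ∫_{ℝ^d} div(pK) dx = 0. If the function (1/p)·div(pK) + h has identically vanishing gradient on ℝ^d (equivalently, ∇ᵀ((1/p)∇ᵀ(pK)) = −∇ᵀh everywhere), then for every x ∈ ℝ^d, ∑_{i=1}^d ∂(pK_i)/∂x_i (x) = −(h(x) − ĥ) p(x), where ĥ := ∫_{ℝ^d} h p dx. -/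
open MeasureTheory

/-- the gain equation of Theorem 2 of the paper.
Let `p : ℝ^d → (0,∞)` be a C¹ probability density, `h` C¹ with `∫ |h| p < ∞`, and
`K : ℝ^d → ℝ^d` C¹ with `div(pK)` integrable and `∫ div(pK) = 0`.  If the function
`(1/p)·div(pK) + h` has identically vanishing gradient (derivative) on `ℝ^d`, then
`∇ᵀ(pK) = −(h − ĥ)p` everywhere, where `ĥ = ∫ h p`. -/
theorem stmt6 {d : ℕ}
    (p : (Fin d → ℝ) → ℝ) (hp : ContDiff ℝ 1 p) (hppos : ∀ x, 0 < p x)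
    (hpint : ∫ x, p x = 1)
    (h : (Fin d → ℝ) → ℝ) (hh : ContDiff ℝ 1 h)
    (hhint : Integrable (fun x => |h x| * p x))
    (K : (Fin d → ℝ) → (Fin d → ℝ)) (hK : ContDiff ℝ 1 K)
    (hdivint : Integrable (fun x => ∑ i, pd i (fun y => p y * K y i) x))
    (hdiv0 : ∫ x, (∑ i, pd i (fun y => p y * K y i) x) = 0)
    (hgrad : ∀ x : Fin d → ℝ, HasFDerivAt
        (fun y => (1 / p y) * (∑ i, pd i (fun z => p z * K z i) y) + h y)
        (0 : (Fin d → ℝ) →L[ℝ] ℝ) x) :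
    ∀ x : Fin d → ℝ,
      (∑ i, pd i (fun y => p y * K y i) x) = -(h x - ∫ y, h y * p y) * p x := by
  set D : (Fin d → ℝ) → ℝ := fun x => ∑ i, pd i (fun y => p y * K y i) x with hDdef
  set c : ℝ := (1 / p 0) * D 0 + h 0 with hcdef
  have hc : ∀ x, (1 / p x) * D x + h x = c := fun x =>
    is_const_of_fderiv_eq_zero (fun y => (hgrad y).differentiableAt)
      (fun y => (hgrad y).fderiv) x 0
  have hD : ∀ x, D x = (c - h x) * p x := by
    intro x
    have hx := hc x
    have hpx := (hppos x).ne'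
    field_simp at hx
    linarith [hx]
  have hpInt : Integrable p := by
    by_contra hni
    rw [integral_undef hni] at hpint
    exact one_ne_zero hpint.symm
  have hhpInt : Integrable (fun x => h x * p x) := by
    refine Integrable.mono' hhint
      ((hh.continuous.mul hp.continuous).aestronglyMeasurable) ?_
    filter_upwards with x
    rw [Real.norm_eq_abs, abs_mul, abs_of_pos (hppos x)]
  have hceq : c = ∫ y, h y * p y := by
    have h1 : ∫ x, D x = ∫ x, (c * p x - h x * p x) := by
      congr 1; funext x; rw [hD x]; ring
    rw [integral_sub (hpInt.const_mul c) hhpInt, MeasureTheory.integral_const_mul, hpint] at h1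
    rw [hdiv0] at h1
    linarith
  intro x
  rw [show (∑ i, pd i (fun y => p y * K y i) x) = D x from rfl, hD x, hceq]
  ring
end

section
/- Let d ≥ 1, 1 ≤ q < ∞, let Ω ⊆ ℝ^d be open, and let p : Ω → (0,∞) be continuously differentiable with M := sup_{x∈Ω} |∇(log p)(x)| < ∞. Let γ : ℝ^d → ℝ be smooth and compactly supported with support contained in the closed unit ball B(0,1). Fix x₀ ∈ ℝ^d and r > 0 with B(x₀, r) ⊆ Ω, and define u(x) = γ((x−x₀)/r) · p(x)^{−1/q} for x ∈ Ω. Then: (a) ( ∫_Ω |u|^q p dx )^{1/q} = r^{d/q} ( ∫_{B(0,1)} |γ(y)|^q dy )^{1/q}; and (b) ( ∫_Ω |∇u|^q p dx )^{1/q} ≤ r^{−1+d/q} ( ∫_{B(0,1)} |∇γ(y)|^q dy )^{1/q} + (r^{d/q}/q) · M · ( ∫_{B(0,1)} |γ(y)|^q dy )^{1/q}. -/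
/-!
Substituting `y = (x - x₀) / r` maps `B(x₀, r)` onto `B(0, 1)` with Jacobian `r ^ d`, and the
weight cancels because `|p ^ (-1/q)| ^ q * p = 1`; this gives (a). For (b), the product rule and
`∇(p ^ s) = s p ^ s ∇(log p)` give `|∇u| ≤ p ^ (-1/q) (r⁻¹ |∇γ(y)| + (M/q) |γ(y)|)` on `Ω`. The
weight cancels again, Minkowski's inequality splits the two terms, and each is rescaled as in (a).
-/

open MeasureTheory Metric Module

section LpNorm

variable {α E : Type*} [MeasurableSpace α] {μ : Measure α} [NormedAddCommGroup E] {q : ℝ}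

theorem integral_norm_add_rpow_le (hq : 1 ≤ q) {f g : α → E}
    (hf : MemLp f (ENNReal.ofReal q) μ) (hg : MemLp g (ENNReal.ofReal q) μ) :
    (∫ a, ‖f a + g a‖ ^ q ∂μ) ^ (1 / q)
      ≤ (∫ a, ‖f a‖ ^ q ∂μ) ^ (1 / q) + (∫ a, ‖g a‖ ^ q ∂μ) ^ (1 / q) := by
  have hq0 : ENNReal.ofReal q ≠ 0 := by simp; linarith
  have key := eLpNorm_add_le hf.1 hg.1 (ENNReal.one_le_ofReal.2 hq)
  rw [(hf.add hg).eLpNorm_eq_integral_rpow_norm hq0 ENNReal.ofReal_ne_top,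
    hf.eLpNorm_eq_integral_rpow_norm hq0 ENNReal.ofReal_ne_top,
    hg.eLpNorm_eq_integral_rpow_norm hq0 ENNReal.ofReal_ne_top,
    ← ENNReal.ofReal_add (by positivity) (by positivity),
    ENNReal.ofReal_le_ofReal_iff (by positivity), ENNReal.toReal_ofReal (by linarith)] at key
  simpa only [one_div, Pi.add_apply] using key

theorem integral_const_mul_rpow_one_div {f : α → ℝ} (hf : ∀ a, 0 ≤ f a) {c : ℝ} (hc : 0 ≤ c)
    (hq : q ≠ 0) :
    (∫ a, (c * f a) ^ q ∂μ) ^ (1 / q) = c * (∫ a, f a ^ q ∂μ) ^ (1 / q) := by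
  simp_rw [Real.mul_rpow hc (hf _), integral_const_mul]
  rw [Real.mul_rpow (by positivity) (integral_nonneg fun a => Real.rpow_nonneg (hf a) q),
    one_div, Real.rpow_rpow_inv hc hq]

end LpNorm

theorem inv_smul_sub_mem_closedBall_zero_one_iff {E : Type*} [NormedAddCommGroup E]
    [NormedSpace ℝ E] {x c : E} {r : ℝ} (hr : 0 < r) :
    r⁻¹ • (x - c) ∈ closedBall (0 : E) 1 ↔ x ∈ closedBall c r := by
  rw [mem_closedBall_zero_iff, mem_closedBall, dist_eq_norm, norm_smul, norm_inv,
    Real.norm_of_nonneg hr.le, inv_mul_le_one₀ hr]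

section Rescale

variable {E F : Type*} [NormedAddCommGroup E] [NormedSpace ℝ E] [MeasurableSpace E] [BorelSpace E]
  [FiniteDimensional ℝ E] (μ : Measure E) [μ.IsAddHaarMeasure]
  [NormedAddCommGroup F] {s : Set E} {c : E} {r q : ℝ}

theorem memLp_comp_inv_smul_sub {f : E → F} (hf : Continuous f)
    (hfs : ∀ z ∉ closedBall 0 1, f z = 0) (hr : 0 < r) (p : ENNReal) :
    MemLp (fun x => f (r⁻¹ • (x - c))) p μ :=
  (hf.comp ((continuous_id.sub continuous_const).const_smul r⁻¹)).memLp_of_hasCompactSupport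
    (HasCompactSupport.intro (isCompact_closedBall c r) fun _ hx =>
      hfs _ (mt (inv_smul_sub_mem_closedBall_zero_one_iff hr).1 hx))

variable [NormedSpace ℝ F]

theorem setIntegral_eq_integral_of_eq_zero_outside_closedBall {f : E → F} (hr : r ≠ 0)
    (hs : ball c r ⊆ s) (hf : ∀ x ∉ closedBall c r, f x = 0) :
    ∫ x in s, f x ∂μ = ∫ x, f x ∂μ := by
  -- only the open ball lies in `s`; the sphere is `μ`-null
  refine setIntegral_eq_integral_of_ae_compl_eq_zero ?_
  filter_upwards [measure_eq_zero_iff_ae_notMem.1 (μ.addHaar_sphere_of_ne_zero c hr)]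
    with x hsphere hxs
  refine hf x fun hx => ?_
  rcases (mem_closedBall.1 hx).lt_or_eq with h | h
  · exact hxs (hs (mem_ball.2 h))
  · exact hsphere (mem_sphere.2 h)

theorem setIntegral_comp_inv_smul_sub {f : E → F} (hr : 0 < r) (hs : ball c r ⊆ s)
    (hf : ∀ z ∉ closedBall 0 1, f z = 0) :
    ∫ x in s, f (r⁻¹ • (x - c)) ∂μ = r ^ finrank ℝ E • ∫ z in ball 0 1, f z ∂μ := by
  rw [setIntegral_eq_integral_of_eq_zero_outside_closedBall μ hr.ne' hs
      fun x hx => hf _ (mt (inv_smul_sub_mem_closedBall_zero_one_iff hr).1 hx),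
    setIntegral_eq_integral_of_eq_zero_outside_closedBall μ one_ne_zero subset_rfl hf,
    integral_sub_right_eq_self (fun x => f (r⁻¹ • x)) c,
    Measure.integral_comp_inv_smul_of_nonneg μ f hr.le]

theorem setIntegral_rpow_comp_inv_smul_sub {f : E → ℝ} (hf0 : ∀ z, 0 ≤ f z)
    (hf : ∀ z ∉ closedBall 0 1, f z = 0) (hr : 0 < r) (hs : ball c r ⊆ s) (hq : 0 < q) :
    (∫ x in s, f (r⁻¹ • (x - c)) ^ q ∂μ) ^ (1 / q)
      = r ^ ((finrank ℝ E : ℝ) / q) * (∫ z in ball 0 1, f z ^ q ∂μ) ^ (1 / q) := by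
  rw [setIntegral_comp_inv_smul_sub μ (f := fun z => f z ^ q) hr hs
      fun z hz => by simp [hf z hz, hq.ne'],
    smul_eq_mul, Real.mul_rpow (by positivity)
      (setIntegral_nonneg measurableSet_ball fun z _ => Real.rpow_nonneg (hf0 z) q),
    ← Real.rpow_natCast, ← Real.rpow_mul hr.le, mul_one_div]

theorem setIntegral_rpow_one_div_le_of_le_add_comp_inv_smul_sub {f g F : E → ℝ}
    (hf : Continuous f) (hg : Continuous g) (hf0 : ∀ z, 0 ≤ f z) (hg0 : ∀ z, 0 ≤ g z)
    (hfs : ∀ z ∉ closedBall 0 1, f z = 0) (hgs : ∀ z ∉ closedBall 0 1, g z = 0)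
    {a b : ℝ} (ha : 0 ≤ a) (hb : 0 ≤ b) (hr : 0 < r) (hsm : MeasurableSet s) (hs : ball c r ⊆ s)
    (hq : 1 ≤ q) (hF0 : ∀ x ∈ s, 0 ≤ F x)
    (hF : ∀ x ∈ s, F x ≤ (a * f (r⁻¹ • (x - c)) + b * g (r⁻¹ • (x - c))) ^ q) :
    (∫ x in s, F x ∂μ) ^ (1 / q)
      ≤ a * r ^ ((finrank ℝ E : ℝ) / q) * (∫ z in ball 0 1, f z ^ q ∂μ) ^ (1 / q)
        + b * r ^ ((finrank ℝ E : ℝ) / q) * (∫ z in ball 0 1, g z ^ q ∂μ) ^ (1 / q) := by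
  have hq0 : 0 < q := by linarith
  have hfLp :=
    ((memLp_comp_inv_smul_sub μ hf hfs hr (c := c) (ENNReal.ofReal q)).const_mul a).restrict s
  have hgLp :=
    ((memLp_comp_inv_smul_sub μ hg hgs hr (c := c) (ENNReal.ofReal q)).const_mul b).restrict s
  have hfnorm : ∀ x, ‖a * f (r⁻¹ • (x - c))‖ = a * f (r⁻¹ • (x - c)) :=
    fun x => Real.norm_of_nonneg (mul_nonneg ha (hf0 _))
  have hgnorm : ∀ x, ‖b * g (r⁻¹ • (x - c))‖ = b * g (r⁻¹ • (x - c)) :=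
    fun x => Real.norm_of_nonneg (mul_nonneg hb (hg0 _))
  have hsumnorm : ∀ x, ‖a * f (r⁻¹ • (x - c)) + b * g (r⁻¹ • (x - c))‖
      = a * f (r⁻¹ • (x - c)) + b * g (r⁻¹ • (x - c)) :=
    fun x => Real.norm_of_nonneg (add_nonneg (mul_nonneg ha (hf0 _)) (mul_nonneg hb (hg0 _)))
  have hmono : ∫ x in s, F x ∂μ
      ≤ ∫ x in s, (a * f (r⁻¹ • (x - c)) + b * g (r⁻¹ • (x - c))) ^ q ∂μ := by
    refine integral_mono_of_nonneg (ae_restrict_of_forall_mem hsm hF0) ?_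
      (ae_restrict_of_forall_mem hsm hF)
    simpa [hsumnorm, ENNReal.toReal_ofReal hq0.le] using
      (hfLp.add hgLp).integrable_norm_rpow (by simpa using hq0) ENNReal.ofReal_ne_top
  calc (∫ x in s, F x ∂μ) ^ (1 / q)
      ≤ (∫ x in s, (a * f (r⁻¹ • (x - c)) + b * g (r⁻¹ • (x - c))) ^ q ∂μ) ^ (1 / q) :=
        Real.rpow_le_rpow (setIntegral_nonneg hsm hF0) hmono (by positivity)
    _ ≤ (∫ x in s, (a * f (r⁻¹ • (x - c))) ^ q ∂μ) ^ (1 / q)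
        + (∫ x in s, (b * g (r⁻¹ • (x - c))) ^ q ∂μ) ^ (1 / q) := by
        simpa only [hfnorm, hgnorm, hsumnorm] using integral_norm_add_rpow_le hq hfLp hgLp
    _ = _ := by
        rw [integral_const_mul_rpow_one_div (fun _ => hf0 _) ha hq0.ne',
          integral_const_mul_rpow_one_div (fun _ => hg0 _) hb hq0.ne',
          setIntegral_rpow_comp_inv_smul_sub μ hf0 hfs hr hs hq0,
          setIntegral_rpow_comp_inv_smul_sub μ hg0 hgs hr hs hq0, mul_assoc, mul_assoc]

end Rescale

section WeightedDerivative

variable {E : Type*} [NormedAddCommGroup E] [NormedSpace ℝ E]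

theorem hasFDerivAt_rpow_const_of_pos {p : E → ℝ} {x : E} (hp : 0 < p x)
    (hd : DifferentiableAt ℝ p x) (s : ℝ) :
    HasFDerivAt (fun y => p y ^ s) ((s * p x ^ s) • fderiv ℝ (fun y => Real.log (p y)) x) x := by
  convert hd.hasFDerivAt.rpow_const (p := s) (Or.inl hp.ne') using 1
  rw [(hd.hasFDerivAt.log hp.ne').fderiv, smul_smul, Real.rpow_sub_one hp.ne']
  congr 1
  field_simp

theorem norm_fderiv_comp_inv_smul_sub_mul_rpow_le {γ p : E → ℝ} {x c : E} {r s M : ℝ}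
    (hγ : DifferentiableAt ℝ γ (r⁻¹ • (x - c))) (hp : 0 < p x) (hd : DifferentiableAt ℝ p x)
    (hr : 0 < r) (hM : ‖fderiv ℝ (fun y => Real.log (p y)) x‖ ≤ M) :
    ‖fderiv ℝ (fun y => γ (r⁻¹ • (y - c)) * p y ^ s) x‖
      ≤ p x ^ s * (r⁻¹ * ‖fderiv ℝ γ (r⁻¹ • (x - c))‖ + |s| * M * |γ (r⁻¹ • (x - c))|) := by
  have hy : HasFDerivAt (fun y => r⁻¹ • (y - c)) (r⁻¹ • ContinuousLinearMap.id ℝ E) x :=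
    ((hasFDerivAt_id x).sub_const c).const_smul r⁻¹
  have hps : 0 < p x ^ s := Real.rpow_pos_of_pos hp s
  have hu : HasFDerivAt (fun y => γ (r⁻¹ • (y - c)) * p y ^ s) _ x :=
    (hγ.hasFDerivAt.comp x hy).mul (hasFDerivAt_rpow_const_of_pos hp hd s)
  rw [hu.fderiv, ContinuousLinearMap.comp_smul, ContinuousLinearMap.comp_id]
  refine (norm_add_le _ _).trans ?_
  simp only [norm_smul, Real.norm_eq_abs, abs_mul, abs_of_pos hps, abs_of_pos (inv_pos.2 hr)]
  calc |γ (r⁻¹ • (x - c))| * (|s| * p x ^ s * ‖fderiv ℝ (fun y => Real.log (p y)) x‖)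
        + p x ^ s * (r⁻¹ * ‖fderiv ℝ γ (r⁻¹ • (x - c))‖)
      ≤ |γ (r⁻¹ • (x - c))| * (|s| * p x ^ s * M)
        + p x ^ s * (r⁻¹ * ‖fderiv ℝ γ (r⁻¹ • (x - c))‖) := by gcongr
    _ = _ := by ring

theorem rpow_neg_one_div_mul_rpow_mul_self {w a q : ℝ} (hw : 0 < w) (ha : 0 ≤ a) (hq : q ≠ 0) :
    (w ^ (-(1 / q)) * a) ^ q * w = a ^ q := by
  rw [Real.mul_rpow (by positivity) ha, ← Real.rpow_mul hw.le, neg_mul, one_div,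
    inv_mul_cancel₀ hq, Real.rpow_neg_one, mul_right_comm, inv_mul_cancel₀ hw.ne', one_mul]

theorem rpow_norm_fderiv_comp_inv_smul_sub_mul_rpow_neg_one_div_mul_le {γ p : E → ℝ} {x c : E}
    {r q M : ℝ} (hγ : DifferentiableAt ℝ γ (r⁻¹ • (x - c))) (hp : 0 < p x)
    (hd : DifferentiableAt ℝ p x) (hr : 0 < r) (hq : 0 < q)
    (hM : ‖fderiv ℝ (fun y => Real.log (p y)) x‖ ≤ M) :
    ‖fderiv ℝ (fun y => γ (r⁻¹ • (y - c)) * p y ^ (-(1 / q))) x‖ ^ q * p x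
      ≤ (r⁻¹ * ‖fderiv ℝ γ (r⁻¹ • (x - c))‖ + M / q * |γ (r⁻¹ • (x - c))|) ^ q := by
  have hM0 : 0 ≤ M := (norm_nonneg _).trans hM
  refine (mul_le_mul_of_nonneg_right (Real.rpow_le_rpow (norm_nonneg _) ?_ hq.le)
    hp.le).trans_eq (rpow_neg_one_div_mul_rpow_mul_self hp (by positivity) hq.ne')
  convert norm_fderiv_comp_inv_smul_sub_mul_rpow_le (s := -(1 / q)) hγ hp hd hr hM using 3
  rw [abs_neg, abs_of_pos (one_div_pos.2 hq)]
  ring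

end WeightedDerivative

theorem norm_gradient_eq_norm_fderiv {E : Type*} [NormedAddCommGroup E] [InnerProductSpace ℝ E]
    [CompleteSpace E] (f : E → ℝ) (x : E) : ‖gradient f x‖ = ‖fderiv ℝ f x‖ :=
  (InnerProductSpace.toDual ℝ E).symm.norm_map _

theorem stmt11_general {d : ℕ} (q : ℝ) (hq : 1 ≤ q)
    (Ω : Set (EuclideanSpace ℝ (Fin d))) (hΩ : IsOpen Ω)
    (p : EuclideanSpace ℝ (Fin d) → ℝ) (hpC : ContDiffOn ℝ 1 p Ω)
    (hppos : ∀ x ∈ Ω, 0 < p x)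
    (M : ℝ) (hM : ∀ x ∈ Ω, ‖gradient (fun y => Real.log (p y)) x‖ ≤ M)
    (γ : EuclideanSpace ℝ (Fin d) → ℝ) (hγ : ContDiff ℝ (⊤ : ℕ∞) γ)
    (hγsupp : tsupport γ ⊆ Metric.closedBall 0 1)
    (x₀ : EuclideanSpace ℝ (Fin d)) (r : ℝ) (hr : 0 < r)
    (hball : Metric.ball x₀ r ⊆ Ω)
    (u : EuclideanSpace ℝ (Fin d) → ℝ)
    (hu : ∀ x, u x = γ (r⁻¹ • (x - x₀)) * (p x) ^ (-(1 / q))) :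
    (∫ x in Ω, |u x| ^ q * p x) ^ (1 / q)
        = r ^ ((d : ℝ) / q)
            * (∫ y in Metric.ball (0 : EuclideanSpace ℝ (Fin d)) 1, |γ y| ^ q) ^ (1 / q)
      ∧ (∫ x in Ω, ‖gradient u x‖ ^ q * p x) ^ (1 / q)
        ≤ r ^ (-1 + (d : ℝ) / q)
            * (∫ y in Metric.ball (0 : EuclideanSpace ℝ (Fin d)) 1, ‖gradient γ y‖ ^ q) ^ (1 / q)
          + (r ^ ((d : ℝ) / q) / q) * M
            * (∫ y in Metric.ball (0 : EuclideanSpace ℝ (Fin d)) 1, |γ y| ^ q) ^ (1 / q) := by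
  have hq0 : 0 < q := by linarith
  have hM0 : 0 ≤ M := (norm_nonneg _).trans (hM x₀ (hball (mem_ball_self hr)))
  have hdim : (finrank ℝ (EuclideanSpace ℝ (Fin d)) : ℝ) = d := by simp
  have hγ0 : ∀ z ∉ closedBall 0 1, |γ z| = 0 := fun z hz => by
    rw [image_eq_zero_of_notMem_tsupport fun h => hz (hγsupp h), abs_zero]
  have hDγ0 : ∀ z ∉ closedBall 0 1, ‖fderiv ℝ γ z‖ = 0 := fun z hz => by
    rw [fderiv_of_notMem_tsupport ℝ fun h => hz (hγsupp h), norm_zero]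
  have hu' : u = fun x => γ (r⁻¹ • (x - x₀)) * p x ^ (-(1 / q)) := funext hu
  constructor
  · have hweight : ∀ x ∈ Ω, |u x| ^ q * p x = |γ (r⁻¹ • (x - x₀))| ^ q := fun x hx => by
      rw [hu, abs_mul, abs_of_pos (Real.rpow_pos_of_pos (hppos x hx) _), mul_comm |γ _|,
        rpow_neg_one_div_mul_rpow_mul_self (hppos x hx) (abs_nonneg _) hq0.ne']
    rw [setIntegral_congr_fun hΩ.measurableSet hweight, setIntegral_rpow_comp_inv_smul_sub volume
      (fun z => abs_nonneg (γ z)) hγ0 hr hball hq0, hdim]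
  · simp_rw [norm_gradient_eq_norm_fderiv]
    have hpointwise : ∀ x ∈ Ω, ‖fderiv ℝ u x‖ ^ q * p x
        ≤ (r⁻¹ * ‖fderiv ℝ γ (r⁻¹ • (x - x₀))‖ + M / q * |γ (r⁻¹ • (x - x₀))|) ^ q :=
      fun x hx => hu' ▸ rpow_norm_fderiv_comp_inv_smul_sub_mul_rpow_neg_one_div_mul_le
        (hγ.differentiable (by simp) _) (hppos x hx)
        ((hpC.differentiableOn one_ne_zero).differentiableAt (hΩ.mem_nhds hx)) hr hq0
        ((norm_gradient_eq_norm_fderiv _ x).symm.trans_le (hM x hx))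
    calc _ ≤ r⁻¹ * r ^ ((d : ℝ) / q) * (∫ y in ball 0 1, ‖fderiv ℝ γ y‖ ^ q) ^ (1 / q)
          + M / q * r ^ ((d : ℝ) / q) * (∫ y in ball 0 1, |γ y| ^ q) ^ (1 / q) := by
          simpa only [hdim] using setIntegral_rpow_one_div_le_of_le_add_comp_inv_smul_sub volume
            (hγ.continuous_fderiv (by simp)).norm hγ.continuous.abs (fun _ => norm_nonneg _)
            (fun _ => abs_nonneg _) hDγ0 hγ0 (by positivity) (by positivity) hr
            hΩ.measurableSet hball hq (fun x hx => by have := hppos x hx; positivity) hpointwise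
      _ = _ := by
          rw [Real.rpow_add hr, Real.rpow_neg_one]
          ring

/-- equations (54)–(55) of the paper: the weighted norms of the
test functions `u = γ((x−x₀)/r) p^{−1/q}`.
(a) `(∫_Ω |u|^q p)^{1/q} = r^{d/q} (∫_{B(0,1)} |γ|^q)^{1/q}`;
(b) `(∫_Ω |∇u|^q p)^{1/q} ≤ r^{−1+d/q} (∫_{B(0,1)} |∇γ|^q)^{1/q}
      + (r^{d/q}/q) M (∫_{B(0,1)} |γ|^q)^{1/q}`,
where `M` bounds `‖∇(log p)‖` on `Ω`. -/
theorem stmt11 {d : ℕ} (hd : 1 ≤ d) (q : ℝ) (hq : 1 ≤ q)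
    (Ω : Set (EuclideanSpace ℝ (Fin d))) (hΩ : IsOpen Ω)
    (p : EuclideanSpace ℝ (Fin d) → ℝ) (hpC : ContDiffOn ℝ 1 p Ω)
    (hppos : ∀ x ∈ Ω, 0 < p x)
    (M : ℝ) (hM : ∀ x ∈ Ω, ‖gradient (fun y => Real.log (p y)) x‖ ≤ M)
    (γ : EuclideanSpace ℝ (Fin d) → ℝ) (hγ : ContDiff ℝ (⊤ : ℕ∞) γ)
    (hγsupp : tsupport γ ⊆ Metric.closedBall 0 1) (hγc : HasCompactSupport γ)
    (x₀ : EuclideanSpace ℝ (Fin d)) (r : ℝ) (hr : 0 < r)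
    (hball : Metric.ball x₀ r ⊆ Ω)
    (u : EuclideanSpace ℝ (Fin d) → ℝ)
    (hu : ∀ x, u x = γ (r⁻¹ • (x - x₀)) * (p x) ^ (-(1 / q))) :
    (∫ x in Ω, |u x| ^ q * p x) ^ (1 / q)
        = r ^ ((d : ℝ) / q)
            * (∫ y in Metric.ball (0 : EuclideanSpace ℝ (Fin d)) 1, |γ y| ^ q) ^ (1 / q)
      ∧ (∫ x in Ω, ‖gradient u x‖ ^ q * p x) ^ (1 / q)
        ≤ r ^ (-1 + (d : ℝ) / q)
            * (∫ y in Metric.ball (0 : EuclideanSpace ℝ (Fin d)) 1, ‖gradient γ y‖ ^ q) ^ (1 / q)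
          + (r ^ ((d : ℝ) / q) / q) * M
            * (∫ y in Metric.ball (0 : EuclideanSpace ℝ (Fin d)) 1, |γ y| ^ q) ^ (1 / q) :=
  stmt11_general q hq Ω hΩ p hpC hppos M hM γ hγ hγsupp x₀ r hr hball u hu
end

section
/- Let p : ℝ^d → (0,∞) be C¹, ψ : ℝ^d → ℝ be C², and G : ℝ^d → ℝ be continuous, and suppose −∑_{i=1}^d ∂/∂x_i ( p · ∂ψ/∂x_i ) = G · p everywhere on ℝ^d. If ∫_{ℝ^d} ψ² p dx < ∞, ∫_{ℝ^d} |∇ψ|² p dx < ∞, and ∫_{ℝ^d} |ψ| |G| p dx < ∞, then ∫_{ℝ^d} |∇ψ|² p dx ≤ ∫_{ℝ^d} |ψ| |G| p dx. -/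
/-
Test the equation against `χ² ψ` for a compactly supported cutoff `χ` and integrate by parts:
`∫ χ² |∇ψ|² p = ∫ χ² ψ G p - 2 ∫ χ ψ (∇χ · ∇ψ) p`. The first term is at most `∫ |ψ| |G| p`, and
since `2 |ψ| |∇ψ| ≤ ψ² + |∇ψ|²` the second is at most `sup |∇χ| · (∫ ψ² p + ∫ |∇ψ|² p)`.
For `χ = β (s • ·)` with a bump `β` equal to `1` at the origin, `sup |∇χ| = O(s)`, and letting
`s → 0` (dominated convergence on the left) gives the estimate.
-/

open MeasureTheory

/-- Partial derivative `∂f/∂x_i` of a scalar function on Euclidean `ℝ^d`. -/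
noncomputable def pdE {d : ℕ} (i : Fin d) (f : EuclideanSpace ℝ (Fin d) → ℝ)
    (x : EuclideanSpace ℝ (Fin d)) : ℝ :=
  fderiv ℝ f x (EuclideanSpace.single i 1)

open Filter Topology

section

variable {E : Type*} [NormedAddCommGroup E] [NormedSpace ℝ E]

theorem tendsto_integral_comp_smul_mul [MeasurableSpace E] [OpensMeasurableSpace E]
    {μ : Measure E} {g : E → ℝ} (hg : Continuous g) (hg1 : ∀ y, |g y| ≤ 1)
    {f : E → ℝ} (hf : Integrable f μ) :
    Tendsto (fun s : ℝ => ∫ x, g (s • x) * f x ∂μ) (𝓝 0) (𝓝 (g 0 * ∫ x, f x ∂μ)) := by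
  rw [← integral_const_mul]
  refine tendsto_integral_filter_of_dominated_convergence (fun x => |f x|) ?_ ?_ hf.abs ?_
  · exact Eventually.of_forall fun s =>
      ((hg.comp (continuous_const_smul s)).aestronglyMeasurable).mul hf.aestronglyMeasurable
  · refine Eventually.of_forall fun s => Eventually.of_forall fun x => ?_
    rw [Real.norm_eq_abs, abs_mul]
    exact mul_le_of_le_one_left (abs_nonneg _) (hg1 _)
  · refine Eventually.of_forall fun x => ?_
    have : Tendsto (fun s : ℝ => s • x) (𝓝 0) (𝓝 0) := by
      simpa using (tendsto_id (x := 𝓝 (0:ℝ))).smul_const x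
    exact ((hg.tendsto 0).comp this).mul_const _

theorem norm_fderiv_comp_smul_le {f : E → ℝ} {K : ℝ} (hK : ∀ y, ‖fderiv ℝ f y‖ ≤ K) (s : ℝ)
    (x : E) : ‖fderiv ℝ (fun y => f (s • y)) x‖ ≤ |s| * K := by
  rw [fderiv_comp_smul, norm_smul, Real.norm_eq_abs]
  exact mul_le_mul_of_nonneg_left (hK _) (abs_nonneg s)

theorem ContDiff.continuous_gradient {F : Type*} [NormedAddCommGroup F] [InnerProductSpace ℝ F]
    [CompleteSpace F] {f : F → ℝ} (hf : ContDiff ℝ 1 f) : Continuous (gradient f) :=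
  (InnerProductSpace.toDual ℝ F).symm.continuous.comp (hf.continuous_fderiv one_ne_zero)

end

theorem neg_two_mul_mul_mul_le {c a t g K : ℝ} (hc : |c| ≤ 1) (ht : |t| ≤ K * g) (hK : 0 ≤ K) :
    -(2 * c * a * t) ≤ K * (a ^ 2 + g ^ 2) :=
  calc -(2 * c * a * t) ≤ 2 * (|c| * |a| * |t|) := by
        have := neg_abs_le (2 * c * a * t)
        simp only [abs_mul, abs_two] at this
        linarith
    _ ≤ 2 * (1 * |a| * (K * g)) := by gcongr
    _ ≤ K * (a ^ 2 + g ^ 2) := by nlinarith [mul_nonneg hK (sq_nonneg (|a| - g)), sq_abs a]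

variable {d : ℕ}

theorem pdE_eq_gradient_apply (f : EuclideanSpace ℝ (Fin d) → ℝ) (x : EuclideanSpace ℝ (Fin d))
    (i : Fin d) : pdE i f x = gradient f x i := by
  rw [pdE, ← inner_gradient_left, EuclideanSpace.inner_single_right]
  simp

theorem sum_pdE_mul_pdE (u ψ : EuclideanSpace ℝ (Fin d) → ℝ) (x : EuclideanSpace ℝ (Fin d)) :
    ∑ i, pdE i u x * pdE i ψ x = fderiv ℝ u x (gradient ψ x) := by
  simp only [pdE_eq_gradient_apply, ← inner_gradient_left, PiLp.inner_apply]
  simp [mul_comm]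

theorem continuous_pdE {f : EuclideanSpace ℝ (Fin d) → ℝ} (hf : ContDiff ℝ 1 f) (i : Fin d) :
    Continuous (pdE i f) :=
  (hf.continuous_fderiv one_ne_zero).clm_apply continuous_const

theorem contDiff_pdE {f : EuclideanSpace ℝ (Fin d) → ℝ} {n : ℕ} (hf : ContDiff ℝ (n + 1) f)
    (i : Fin d) : ContDiff ℝ n (pdE i f) :=
  (hf.fderiv_right le_rfl).clm_apply contDiff_const

theorem HasCompactSupport.pdE {f : EuclideanSpace ℝ (Fin d) → ℝ} (hf : HasCompactSupport f)
    (i : Fin d) : HasCompactSupport (pdE i f) :=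
  (hf.fderiv ℝ).comp_left
    (g := fun L : EuclideanSpace ℝ (Fin d) →L[ℝ] ℝ => L (EuclideanSpace.single i 1)) rfl

theorem integral_mul_sum_pdE {u : EuclideanSpace ℝ (Fin d) → ℝ} (hu : ContDiff ℝ 1 u)
    (hu' : HasCompactSupport u) {F : Fin d → EuclideanSpace ℝ (Fin d) → ℝ}
    (hF : ∀ i, ContDiff ℝ 1 (F i)) :
    ∫ x, u x * ∑ i, pdE i (F i) x = -∫ x, ∑ i, pdE i u x * F i x := by
  have hu₁ := hu.differentiable one_ne_zero
  have hint : ∀ i, Integrable fun x => u x * pdE i (F i) x := fun i =>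
    (hu.continuous.mul (continuous_pdE (hF i) i)).integrable_of_hasCompactSupport hu'.mul_right
  have hint' : ∀ i, Integrable fun x => pdE i u x * F i x := fun i =>
    ((continuous_pdE hu i).mul (hF i).continuous).integrable_of_hasCompactSupport
      (hu'.pdE i).mul_right
  simp only [Finset.mul_sum]
  rw [integral_finsetSum _ fun i _ => hint i, integral_finsetSum _ fun i _ => hint' i,
    ← Finset.sum_neg_distrib]
  refine Finset.sum_congr rfl fun i _ => integral_mul_fderiv_eq_neg_fderiv_mul_of_integrable
    (hint' i) (hint i) ?_ (fun x _ => hu₁ x) (fun x _ => (hF i).differentiable one_ne_zero x)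
  exact (hu.continuous.mul (hF i).continuous).integrable_of_hasCompactSupport hu'.mul_right

theorem integral_fderiv_apply_gradient_mul {u : EuclideanSpace ℝ (Fin d) → ℝ}
    (hu : ContDiff ℝ 1 u) (hu' : HasCompactSupport u) {p ψ : EuclideanSpace ℝ (Fin d) → ℝ}
    (hp : ContDiff ℝ 1 p) (hψ : ContDiff ℝ 2 ψ) :
    ∫ x, fderiv ℝ u x (gradient ψ x) * p x =
      -∫ x, u x * ∑ i, pdE i (fun y => p y * pdE i ψ y) x := by
  rw [integral_mul_sum_pdE hu hu' fun i => hp.mul (contDiff_pdE hψ i), neg_neg]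
  congr 1 with x
  rw [← sum_pdE_mul_pdE, Finset.sum_mul]
  exact Finset.sum_congr rfl fun i _ => by ring

theorem fderiv_sq_mul_apply {χ ψ : EuclideanSpace ℝ (Fin d) → ℝ} {x : EuclideanSpace ℝ (Fin d)}
    (hχ : DifferentiableAt ℝ χ x) (hψ : DifferentiableAt ℝ ψ x) (v : EuclideanSpace ℝ (Fin d)) :
    fderiv ℝ (fun y => χ y ^ 2 * ψ y) x v =
      χ x ^ 2 * fderiv ℝ ψ x v + 2 * χ x * ψ x * fderiv ℝ χ x v := by
  rw [fderiv_fun_mul (hχ.fun_pow 2) hψ, fderiv_fun_pow 2 hχ]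
  simp only [Nat.add_one_sub_one, pow_one, nsmul_eq_mul, Nat.cast_ofNat, add_apply, smul_apply,
    smul_eq_mul]
  ring

theorem integral_sq_mul_norm_gradient_sq_mul_add_cross_eq {χ : EuclideanSpace ℝ (Fin d) → ℝ}
    (hχ : ContDiff ℝ 1 χ) (hχ' : HasCompactSupport χ) {p : EuclideanSpace ℝ (Fin d) → ℝ}
    (hp : ContDiff ℝ 1 p) {ψ : EuclideanSpace ℝ (Fin d) → ℝ} (hψ : ContDiff ℝ 2 ψ)
    {G : EuclideanSpace ℝ (Fin d) → ℝ}
    (heq : ∀ x, -∑ i, pdE i (fun y => p y * pdE i ψ y) x = G x * p x) :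
    (∫ x, χ x ^ 2 * (‖gradient ψ x‖ ^ 2 * p x)) +
        ∫ x, χ x * (2 * ψ x * fderiv ℝ χ x (gradient ψ x) * p x) =
      ∫ x, χ x ^ 2 * ψ x * (G x * p x) := by
  have hψ1 : ContDiff ℝ 1 ψ := hψ.of_le one_le_two
  have hχsq' : HasCompactSupport fun x => χ x ^ 2 :=
    hχ'.comp_left (g := fun t : ℝ => t ^ 2) (by norm_num)
  have hAint : Integrable fun x => χ x ^ 2 * (‖gradient ψ x‖ ^ 2 * p x) :=
    ((hχ.continuous.pow 2).mul ((hψ1.continuous_gradient.norm.pow 2).mul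
      hp.continuous)).integrable_of_hasCompactSupport hχsq'.mul_right
  have hTint : Integrable fun x => χ x * (2 * ψ x * fderiv ℝ χ x (gradient ψ x) * p x) :=
    (hχ.continuous.mul (((continuous_const.mul hψ1.continuous).mul
      ((hχ.continuous_fderiv one_ne_zero).clm_apply hψ1.continuous_gradient)).mul
      hp.continuous)).integrable_of_hasCompactSupport hχ'.mul_right
  calc (∫ x, χ x ^ 2 * (‖gradient ψ x‖ ^ 2 * p x)) +
        ∫ x, χ x * (2 * ψ x * fderiv ℝ χ x (gradient ψ x) * p x)
      = ∫ x, fderiv ℝ (fun y => χ y ^ 2 * ψ y) x (gradient ψ x) * p x := by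
        rw [← integral_add hAint hTint]
        congr 1 with x
        rw [fderiv_sq_mul_apply (hχ.differentiable one_ne_zero x)
          (hψ1.differentiable one_ne_zero x), ← inner_gradient_left (f := ψ),
          real_inner_self_eq_norm_sq]
        ring
    _ = -∫ x, χ x ^ 2 * ψ x * ∑ i, pdE i (fun y => p y * pdE i ψ y) x :=
        integral_fderiv_apply_gradient_mul ((hχ.pow 2).mul hψ1) hχsq'.mul_right hp hψ
    _ = ∫ x, χ x ^ 2 * ψ x * (G x * p x) := by
        rw [← integral_neg]
        congr 1 with x
        rw [← heq x, mul_neg]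

theorem integral_sq_mul_norm_gradient_sq_mul_le {χ : EuclideanSpace ℝ (Fin d) → ℝ}
    (hχ : ContDiff ℝ 1 χ) (hχ' : HasCompactSupport χ) (hχ1 : ∀ x, |χ x| ≤ 1) {K : ℝ}
    (hK0 : 0 ≤ K) (hK : ∀ x, ‖fderiv ℝ χ x‖ ≤ K) {p : EuclideanSpace ℝ (Fin d) → ℝ}
    (hp : ContDiff ℝ 1 p) (hp0 : ∀ x, 0 ≤ p x) {ψ : EuclideanSpace ℝ (Fin d) → ℝ}
    (hψ : ContDiff ℝ 2 ψ) {G : EuclideanSpace ℝ (Fin d) → ℝ}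
    (heq : ∀ x, -∑ i, pdE i (fun y => p y * pdE i ψ y) x = G x * p x)
    (h1 : Integrable (fun x => ψ x ^ 2 * p x))
    (h2 : Integrable (fun x => ‖gradient ψ x‖ ^ 2 * p x))
    (h3 : Integrable (fun x => |ψ x| * |G x| * p x)) :
    ∫ x, χ x ^ 2 * (‖gradient ψ x‖ ^ 2 * p x) ≤
      (∫ x, |ψ x| * |G x| * p x) + K * ((∫ x, ψ x ^ 2 * p x) + ∫ x, ‖gradient ψ x‖ ^ 2 * p x) := by
  have hψ1 : ContDiff ℝ 1 ψ := hψ.of_le one_le_two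
  have hχsq' : HasCompactSupport fun x => χ x ^ 2 :=
    hχ'.comp_left (g := fun t : ℝ => t ^ 2) (by norm_num)
  have hTint : Integrable fun x => χ x * (2 * ψ x * fderiv ℝ χ x (gradient ψ x) * p x) :=
    (hχ.continuous.mul (((continuous_const.mul hψ1.continuous).mul
      ((hχ.continuous_fderiv one_ne_zero).clm_apply hψ1.continuous_gradient)).mul
      hp.continuous)).integrable_of_hasCompactSupport hχ'.mul_right
  have hGp : Continuous fun x => G x * p x := by
    simp only [← heq]
    exact (continuous_finsetSum _ fun i _ => continuous_pdE (hp.mul (contDiff_pdE hψ i)) i).neg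
  have hCint : Integrable fun x => χ x ^ 2 * ψ x * (G x * p x) :=
    (((hχ.continuous.pow 2).mul hψ1.continuous).mul hGp).integrable_of_hasCompactSupport
      hχsq'.mul_right.mul_right
  have hC : ∫ x, χ x ^ 2 * ψ x * (G x * p x) ≤ ∫ x, |ψ x| * |G x| * p x := by
    refine integral_mono hCint h3 fun x => ?_
    have hχsq : χ x ^ 2 ≤ 1 := (sq_le_one_iff_abs_le_one _).2 (hχ1 x)
    have : χ x ^ 2 * (ψ x * G x) ≤ |ψ x| * |G x| := by
      refine (le_abs_self _).trans ?_
      rw [abs_mul, abs_mul, abs_sq]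
      exact mul_le_of_le_one_left (by positivity) hχsq
    have := mul_le_mul_of_nonneg_right this (hp0 x)
    linarith
  have hT : -∫ x, χ x * (2 * ψ x * fderiv ℝ χ x (gradient ψ x) * p x) ≤
      K * ((∫ x, ψ x ^ 2 * p x) + ∫ x, ‖gradient ψ x‖ ^ 2 * p x) := by
    rw [← integral_neg, ← integral_add h1 h2, ← integral_const_mul]
    refine integral_mono hTint.neg ((h1.add h2).const_mul K) fun x => ?_
    have ht : |fderiv ℝ χ x (gradient ψ x)| ≤ K * ‖gradient ψ x‖ :=
      ((fderiv ℝ χ x).le_opNorm _).trans (mul_le_mul_of_nonneg_right (hK x) (norm_nonneg _))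
    have := mul_le_mul_of_nonneg_right (neg_two_mul_mul_mul_le (a := ψ x) (hχ1 x) ht hK0) (hp0 x)
    dsimp only
    linarith
  linarith [integral_sq_mul_norm_gradient_sq_mul_add_cross_eq hχ hχ' hp hψ heq]

theorem stmt13_general {d : ℕ}
    (p : EuclideanSpace ℝ (Fin d) → ℝ) (hp : ContDiff ℝ 1 p) (hppos : ∀ x, 0 < p x)
    (ψ : EuclideanSpace ℝ (Fin d) → ℝ) (hψ : ContDiff ℝ 2 ψ)
    (G : EuclideanSpace ℝ (Fin d) → ℝ)
    (heq : ∀ x, -∑ i, pdE i (fun y => p y * pdE i ψ y) x = G x * p x)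
    (h1 : Integrable (fun x => (ψ x) ^ 2 * p x))
    (h2 : Integrable (fun x => ‖gradient ψ x‖ ^ 2 * p x))
    (h3 : Integrable (fun x => |ψ x| * |G x| * p x)) :
    ∫ x, ‖gradient ψ x‖ ^ 2 * p x ≤ ∫ x, |ψ x| * |G x| * p x := by
  let β : ContDiffBump (0 : EuclideanSpace ℝ (Fin d)) := default
  have hβ1 : ∀ y, |β y| ≤ 1 := fun y => (abs_of_nonneg β.nonneg).trans_le β.le_one
  obtain ⟨K, hK⟩ := (β.hasCompactSupport.fderiv ℝ).exists_bound_of_continuous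
    (β.contDiff.continuous_fderiv one_ne_zero)
  have hK0 : 0 ≤ K := (norm_nonneg _).trans (hK 0)
  set I := (∫ x, ψ x ^ 2 * p x) + ∫ x, ‖gradient ψ x‖ ^ 2 * p x
  have hcut : ∀ s > (0 : ℝ), ∫ x, β (s • x) ^ 2 * (‖gradient ψ x‖ ^ 2 * p x) ≤
      (∫ x, |ψ x| * |G x| * p x) + s * K * I := fun s hs =>
    integral_sq_mul_norm_gradient_sq_mul_le (β.contDiff.comp (contDiff_const_smul s))
      (β.hasCompactSupport.comp_smul hs.ne') (fun x => hβ1 _) (by positivity)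
      (fun x => (norm_fderiv_comp_smul_le hK s x).trans_eq (by rw [abs_of_pos hs])) hp
      (fun x => (hppos x).le) hψ heq h1 h2 h3
  have hlhs : Tendsto (fun s : ℝ => ∫ x, β (s • x) ^ 2 * (‖gradient ψ x‖ ^ 2 * p x)) (𝓝[>] 0)
      (𝓝 (∫ x, ‖gradient ψ x‖ ^ 2 * p x)) := by
    have hβ0 : β 0 = 1 := β.one_of_mem_closedBall (Metric.mem_closedBall_self β.rIn_pos.le)
    have := (tendsto_integral_comp_smul_mul (g := fun y => β y ^ 2) (β.continuous.pow 2)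
      (fun y => by rw [abs_pow]; exact pow_le_one₀ (abs_nonneg _) (hβ1 y)) h2).mono_left
      (nhdsWithin_le_nhds (s := Set.Ioi 0))
    rwa [hβ0, one_pow, one_mul] at this
  have hrhs : Tendsto (fun s : ℝ => (∫ x, |ψ x| * |G x| * p x) + s * K * I) (𝓝[>] 0)
      (𝓝 (∫ x, |ψ x| * |G x| * p x)) := by
    have hc : Continuous fun s : ℝ => (∫ x, |ψ x| * |G x| * p x) + s * K * I := by fun_prop
    simpa using (hc.tendsto 0).mono_left nhdsWithin_le_nhds
  exact le_of_tendsto_of_tendsto hlhs hrhs (eventually_nhdsWithin_of_forall hcut)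

/-- the a priori estimate (62) in the proof of Lemma 3 of the paper.
Let `p : ℝ^d → (0,∞)` be C¹, `ψ` C², `G` continuous with `−∑_i ∂_i(p ∂_i ψ) = G p`
everywhere.  If `∫ ψ² p`, `∫ |∇ψ|² p` and `∫ |ψ||G| p` are finite, then
`∫ |∇ψ|² p ≤ ∫ |ψ||G| p`. -/
theorem stmt13 {d : ℕ}
    (p : EuclideanSpace ℝ (Fin d) → ℝ) (hp : ContDiff ℝ 1 p) (hppos : ∀ x, 0 < p x)
    (ψ : EuclideanSpace ℝ (Fin d) → ℝ) (hψ : ContDiff ℝ 2 ψ)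
    (G : EuclideanSpace ℝ (Fin d) → ℝ) (hG : Continuous G)
    (heq : ∀ x, -∑ i, pdE i (fun y => p y * pdE i ψ y) x = G x * p x)
    (h1 : Integrable (fun x => (ψ x) ^ 2 * p x))
    (h2 : Integrable (fun x => ‖gradient ψ x‖ ^ 2 * p x))
    (h3 : Integrable (fun x => |ψ x| * |G x| * p x)) :
    ∫ x, ‖gradient ψ x‖ ^ 2 * p x ≤ ∫ x, |ψ x| * |G x| * p x :=
  stmt13_general p hp hppos ψ hψ G heq h1 h2 h3
end

section
/- Let p : ℝ^d → (0,∞) be C¹ and let w : ℝ^d → ℝ be C¹ with ∫_{ℝ^d} w² p dx < ∞ and ∫_{ℝ^d} |∇w|² p dx < ∞. Suppose that ∫_{ℝ^d} ∇ψ(x) · ∇w(x) p(x) dx = 0 for every continuously differentiable ψ : ℝ^d → ℝ with compact support, and that there is a constant C > 0 with ( ∫ w² p dx )^{1/2} ≤ C ( ∫ |∇w|² p dx )^{1/2}. Then w ≡ 0 on ℝ^d. -/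
open MeasureTheory Filter
open scoped RealInnerProductSpace Topology

/-! Test the weak equation with `ψ = χ_R w`, where `χ_R` is a cutoff equal to `1` on the ball of
radius `R` with `‖∇χ_R‖ = O(1/R)`. This gives `∫ χ_R ‖∇w‖² p = -∫ w ⟪∇χ_R, ∇w⟫ p`, and by AM-GM
the right-hand side is `O(1/R)` times `∫ (w² + ‖∇w‖²) p < ∞`. Letting `R → ∞` yields
`∫ ‖∇w‖² p = 0`; the Poincaré inequality then forces `∫ w² p = 0`, and as `p > 0` and `w` is
continuous, `w` vanishes everywhere. -/

section Gradient

variable {E : Type*} [NormedAddCommGroup E] [InnerProductSpace ℝ E] [CompleteSpace E]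

lemma norm_gradient (f : E → ℝ) (x : E) : ‖gradient f x‖ = ‖fderiv ℝ f x‖ :=
  (InnerProductSpace.toDual ℝ E).symm.norm_map _

lemma gradient_mul {f g : E → ℝ} {x : E} (hf : DifferentiableAt ℝ f x)
    (hg : DifferentiableAt ℝ g x) :
    gradient (fun y => f y * g y) x = f x • gradient g x + g x • gradient f x := by
  refine ext_inner_right ℝ fun v => ?_
  rw [inner_gradient_left, fderiv_fun_mul hf hg, inner_add_left, real_inner_smul_left,
    real_inner_smul_left, inner_gradient_left, inner_gradient_left]
  rfl

lemma ContDiff.continuous_gradient_s15 {f : E → ℝ} (hf : ContDiff ℝ 1 f) :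
    Continuous (gradient f) :=
  (InnerProductSpace.toDual ℝ E).symm.continuous.comp (hf.continuous_fderiv one_ne_zero)

end Gradient

section Cutoff

variable {E : Type*} [NormedAddCommGroup E] [InnerProductSpace ℝ E]

noncomputable def cutoff (R : ℝ) (x : E) : ℝ :=
  (⟨1, 2, one_pos, one_lt_two⟩ : ContDiffBump (0 : E)) (R⁻¹ • x)

lemma contDiff_cutoff {n : ℕ∞} (R : ℝ) : ContDiff ℝ n (cutoff (E := E) R) :=
  (ContDiffBump.contDiff _).comp (contDiff_const_smul _)

lemma cutoff_nonneg (R : ℝ) (x : E) : 0 ≤ cutoff R x :=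
  ContDiffBump.nonneg _

lemma cutoff_le_one (R : ℝ) (x : E) : cutoff R x ≤ 1 :=
  ContDiffBump.le_one _

lemma cutoff_eq_one {R : ℝ} (hR : 0 < R) {x : E} (hx : ‖x‖ ≤ R) : cutoff R x = 1 := by
  apply ContDiffBump.one_of_mem_closedBall
  rw [mem_closedBall_zero_iff, norm_smul, norm_inv, Real.norm_of_nonneg hR.le]
  exact inv_mul_le_one_of_le₀ hx hR.le

lemma tendsto_cutoff_atTop (x : E) : Tendsto (fun R => cutoff R x) atTop (𝓝 1) :=
  tendsto_const_nhds.congr' <| (eventually_ge_atTop (max ‖x‖ 1)).mono fun _ hR =>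
    (cutoff_eq_one (lt_of_lt_of_le one_pos (le_of_max_le_right hR)) (le_of_max_le_left hR)).symm

lemma hasCompactSupport_cutoff [FiniteDimensional ℝ E] {R : ℝ} (hR : R ≠ 0) :
    HasCompactSupport (cutoff (E := E) R) :=
  (ContDiffBump.hasCompactSupport _).comp_smul (inv_ne_zero hR)

lemma exists_norm_gradient_cutoff_le [FiniteDimensional ℝ E] :
    ∃ K, ∀ (R : ℝ) (x : E), ‖gradient (cutoff R) x‖ ≤ K * |R|⁻¹ := by
  let φ : ContDiffBump (0 : E) := ⟨1, 2, one_pos, one_lt_two⟩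
  obtain ⟨K, hK⟩ := (φ.hasCompactSupport.fderiv (𝕜 := ℝ)).exists_bound_of_continuous
    ((φ.contDiff (n := 1)).continuous_fderiv one_ne_zero)
  refine ⟨K, fun R x => ?_⟩
  change ‖gradient (fun y => φ (R⁻¹ • y)) x‖ ≤ _
  rw [norm_gradient, fderiv_comp_smul, norm_smul, norm_inv, Real.norm_eq_abs, mul_comm]
  exact mul_le_mul_of_nonneg_right (hK _) (inv_nonneg.2 (abs_nonneg R))

end Cutoff

lemma norm_mul_inner_mul_le {E : Type*} [NormedAddCommGroup E] [InnerProductSpace ℝ E]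
    {a p c : ℝ} {u v : E} (hp : 0 ≤ p) (hu : ‖u‖ ≤ c) :
    ‖a * ⟪u, v⟫ * p‖ ≤ c * ((a ^ 2 * p + ‖v‖ ^ 2 * p) / 2) := by
  have hinner : |⟪u, v⟫| ≤ c * ‖v‖ :=
    (abs_real_inner_le_norm u v).trans (mul_le_mul_of_nonneg_right hu (norm_nonneg v))
  have hamgm : |a| * ‖v‖ ≤ (a ^ 2 + ‖v‖ ^ 2) / 2 := by
    nlinarith [sq_nonneg (|a| - ‖v‖), sq_abs a]
  have hc : 0 ≤ c := (norm_nonneg u).trans hu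
  rw [Real.norm_eq_abs, abs_mul, abs_mul, abs_of_nonneg hp]
  calc |a| * |⟪u, v⟫| * p ≤ |a| * (c * ‖v‖) * p := by gcongr
    _ = c * (|a| * ‖v‖) * p := by ring
    _ ≤ c * ((a ^ 2 + ‖v‖ ^ 2) / 2) * p := by gcongr
    _ = c * ((a ^ 2 * p + ‖v‖ ^ 2 * p) / 2) := by ring

section Weighted

variable {E : Type*} [NormedAddCommGroup E] [InnerProductSpace ℝ E] [MeasurableSpace E]
  {μ : Measure E}

lemma tendsto_integral_cutoff_mul [BorelSpace E] {f : E → ℝ} (hf : Integrable f μ) :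
    Tendsto (fun R => ∫ x, cutoff R x * f x ∂μ) atTop (𝓝 (∫ x, f x ∂μ)) := by
  refine tendsto_integral_filter_of_dominated_convergence (fun x => ‖f x‖)
    (.of_forall fun R => ((contDiff_cutoff (n := 0) R).continuous.aestronglyMeasurable.mul
      hf.aestronglyMeasurable)) (.of_forall fun R => .of_forall fun x => ?_) hf.norm
    (.of_forall fun x => by simpa using (tendsto_cutoff_atTop x).mul_const (f x))
  rw [norm_mul, Real.norm_of_nonneg (cutoff_nonneg R x)]
  exact mul_le_of_le_one_left (norm_nonneg _) (cutoff_le_one R x)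

lemma tendsto_integral_mul_inner_gradient_cutoff [FiniteDimensional ℝ E] {p w : E → ℝ}
    (hp : ∀ x, 0 ≤ p x)
    (hw2 : Integrable (fun x => w x ^ 2 * p x) μ)
    (hgw2 : Integrable (fun x => ‖gradient w x‖ ^ 2 * p x) μ) :
    Tendsto (fun R => ∫ x, w x * ⟪gradient (cutoff R) x, gradient w x⟫ * p x ∂μ) atTop (𝓝 0) := by
  obtain ⟨K, hK⟩ := exists_norm_gradient_cutoff_le (E := E)
  have hg := (hw2.add hgw2).div_const 2
  have hbound (R : ℝ) : ‖∫ x, w x * ⟪gradient (cutoff R) x, gradient w x⟫ * p x ∂μ‖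
      ≤ K * |R|⁻¹ * ∫ x, (w x ^ 2 * p x + ‖gradient w x‖ ^ 2 * p x) / 2 ∂μ := by
    rw [← integral_const_mul]
    exact norm_integral_le_of_norm_le (hg.const_mul _)
      (.of_forall fun x => norm_mul_inner_mul_le (hp x) (hK R x))
  have hscale : Tendsto (fun R : ℝ => |R|⁻¹) atTop (𝓝 0) :=
    tendsto_inv_atTop_zero.congr' <| (eventually_ge_atTop 0).mono fun R hR => by
      simp only [abs_of_nonneg hR]
  refine squeeze_zero_norm hbound ?_
  simpa using (hscale.const_mul K).mul_const _

theorem integral_norm_gradient_sq_mul_eq_zero [FiniteDimensional ℝ E] [BorelSpace E]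
    {p w : E → ℝ} (hp : Continuous p) (hp0 : ∀ x, 0 ≤ p x) (hw : ContDiff ℝ 1 w)
    (hw2 : Integrable (fun x => w x ^ 2 * p x) μ)
    (hgw2 : Integrable (fun x => ‖gradient w x‖ ^ 2 * p x) μ)
    (horth : ∀ ψ : E → ℝ, ContDiff ℝ 1 ψ → HasCompactSupport ψ →
      ∫ x, ⟪gradient ψ x, gradient w x⟫ * p x ∂μ = 0) :
    ∫ x, ‖gradient w x‖ ^ 2 * p x ∂μ = 0 := by
  obtain ⟨K, hK⟩ := exists_norm_gradient_cutoff_le (E := E)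
  have hsplit (R : ℝ) (hR : R ≠ 0) : ∫ x, cutoff R x * (‖gradient w x‖ ^ 2 * p x) ∂μ
      = -∫ x, w x * ⟪gradient (cutoff R) x, gradient w x⟫ * p x ∂μ := by
    have hχ : ContDiff ℝ 1 (cutoff (E := E) R) := contDiff_cutoff R
    have hA : Integrable (fun x => cutoff R x * (‖gradient w x‖ ^ 2 * p x)) μ :=
      hgw2.bdd_mul hχ.continuous.aestronglyMeasurable (c := 1) (.of_forall fun x => by
        rw [Real.norm_of_nonneg (cutoff_nonneg R x)]; exact cutoff_le_one R x)
    have hB : Integrable (fun x => w x * ⟪gradient (cutoff R) x, gradient w x⟫ * p x) μ :=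
      (((hw2.add hgw2).div_const 2).const_mul (K * |R|⁻¹)).mono'
        ((hw.continuous.mul (hχ.continuous_gradient_s15.inner hw.continuous_gradient_s15)).mul
          hp).aestronglyMeasurable
        (.of_forall fun x => norm_mul_inner_mul_le (hp0 x) (hK R x))
    rw [eq_neg_iff_add_eq_zero, ← integral_add hA hB,
      ← horth _ (hχ.mul hw) (hasCompactSupport_cutoff hR).mul_right]
    refine integral_congr_ae (.of_forall fun x => ?_)
    dsimp only
    rw [gradient_mul (hχ.differentiable one_ne_zero x) (hw.differentiable one_ne_zero x),
      inner_add_left, real_inner_smul_left, real_inner_smul_left, real_inner_self_eq_norm_sq,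
      real_inner_comm]
    ring
  refine tendsto_nhds_unique (tendsto_integral_cutoff_mul hgw2) ?_
  simpa using ((tendsto_integral_mul_inner_gradient_cutoff hp0 hw2 hgw2).neg).congr'
    ((eventually_ne_atTop 0).mono fun R hR => (hsplit R hR).symm)

end Weighted

lemma eq_zero_of_integral_sq_mul_eq_zero {X : Type*} [TopologicalSpace X] [MeasurableSpace X]
    {μ : Measure X} [μ.IsOpenPosMeasure] {p w : X → ℝ} (hp : ∀ x, 0 < p x)
    (hw : Continuous w) (hw2 : Integrable (fun x => w x ^ 2 * p x) μ)
    (h : ∫ x, w x ^ 2 * p x ∂μ = 0) : w = 0 := by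
  have hsq : (fun x => w x ^ 2 * p x) =ᵐ[μ] 0 :=
    (integral_eq_zero_iff_of_nonneg (fun x => by have := hp x; positivity) hw2).1 h
  refine (hw.ae_eq_iff_eq μ continuous_zero).1 (hsq.mono fun x hx => ?_)
  simpa [(hp x).ne'] using hx

theorem stmt15_general {d : ℕ}
    (p : EuclideanSpace ℝ (Fin d) → ℝ) (hp : ContDiff ℝ 1 p) (hppos : ∀ x, 0 < p x)
    (w : EuclideanSpace ℝ (Fin d) → ℝ) (hw : ContDiff ℝ 1 w)
    (hw2 : Integrable (fun x => (w x) ^ 2 * p x))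
    (hgw2 : Integrable (fun x => ‖gradient w x‖ ^ 2 * p x))
    (horth : ∀ ψ : EuclideanSpace ℝ (Fin d) → ℝ,
      ContDiff ℝ 1 ψ → HasCompactSupport ψ →
      ∫ x, ⟪gradient ψ x, gradient w x⟫ * p x = 0)
    (C : ℝ)
    (hPoin : (∫ x, (w x) ^ 2 * p x) ^ ((1 : ℝ) / 2)
      ≤ C * (∫ x, ‖gradient w x‖ ^ 2 * p x) ^ ((1 : ℝ) / 2)) :
    ∀ x, w x = 0 := by
  have henergy := integral_norm_gradient_sq_mul_eq_zero hp.continuous (fun x => (hppos x).le)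
    hw hw2 hgw2 horth
  have hnonneg : 0 ≤ ∫ x, w x ^ 2 * p x :=
    integral_nonneg fun x => by have := hppos x; positivity
  rw [henergy, Real.zero_rpow (by norm_num), mul_zero] at hPoin
  have hL2 : ∫ x, w x ^ 2 * p x = 0 :=
    (Real.rpow_eq_zero hnonneg (by norm_num)).1 (le_antisymm hPoin (Real.rpow_nonneg hnonneg _))
  exact congrFun (eq_zero_of_integral_sq_mul_eq_zero hppos hw.continuous hw2 hL2)

/-- uniqueness assertion underlying Theorems 4 and 5 of the paper.
Let `p : ℝ^d → (0,∞)` be C¹ and `w` C¹ with `∫ w² p < ∞` and `∫ |∇w|² p < ∞`.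
If `∫ ⟪∇ψ, ∇w⟫ p = 0` for every C¹ compactly supported `ψ`, and `w` satisfies a
weighted Poincaré inequality `(∫ w² p)^{1/2} ≤ C (∫ |∇w|² p)^{1/2}`, then `w ≡ 0`. -/
theorem stmt15 {d : ℕ}
    (p : EuclideanSpace ℝ (Fin d) → ℝ) (hp : ContDiff ℝ 1 p) (hppos : ∀ x, 0 < p x)
    (w : EuclideanSpace ℝ (Fin d) → ℝ) (hw : ContDiff ℝ 1 w)
    (hw2 : Integrable (fun x => (w x) ^ 2 * p x))
    (hgw2 : Integrable (fun x => ‖gradient w x‖ ^ 2 * p x))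
    (horth : ∀ ψ : EuclideanSpace ℝ (Fin d) → ℝ,
      ContDiff ℝ 1 ψ → HasCompactSupport ψ →
      ∫ x, ⟪gradient ψ x, gradient w x⟫ * p x = 0)
    (C : ℝ) (hC : 0 < C)
    (hPoin : (∫ x, (w x) ^ 2 * p x) ^ ((1 : ℝ) / 2)
      ≤ C * (∫ x, ‖gradient w x‖ ^ 2 * p x) ^ ((1 : ℝ) / 2)) :
    ∀ x, w x = 0 :=
  stmt15_general p hp hppos w hw hw2 hgw2 horth C hPoin
end
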